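/- Let q ≡ 1 (mod n), ε ∈ 𝔽_q a primitive n-th root of unity, f a monic irreducible in 𝔽_q[t], and F = 𝔽_q(t)_(f) the f-adic completion. If a, a' are units of the valuation ring of F with a ≡ a' (mod f), then for any b ∈ F* the symbol algebras (a,b;F,ε) and (a',b;F,ε) are Brauer equivalent. -/

import Mathlib

/-!
Since `q ≡ 1 (mod n)`, `n` is prime to the residue characteristic, so `X ^ n - a / a'` has the
simple approximate root `1` modulo `f`. Newton iteration converges in the complete field `F`
(Hensel's lemma), giving `c` with `a = c ^ n * a'`. Sending `u ↦ c • u`, `v ↦ v` then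
identifies `(a,b;F,ε)` with `(a',b;F,ε)` already as algebras.
-/

set_option synthInstance.maxHeartbeats 1000000
set_option maxHeartbeats 1000000

open scoped TensorProduct

/-- The defining relations of the symbol algebra `(a,b;K,ε)`: generators `u = ι 0`, `v = ι 1`
with `uⁿ = a`, `vⁿ = b`, `uv = ε·vu`. -/
def SymbolRel (K : Type) [Field K] (n : ℕ) (ε a b : K) :
    FreeAlgebra K (Fin 2) → FreeAlgebra K (Fin 2) → Prop := fun p q =>
  (p = (FreeAlgebra.ι K (0 : Fin 2)) ^ n ∧ q = algebraMap K _ a) ∨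
  (p = (FreeAlgebra.ι K (1 : Fin 2)) ^ n ∧ q = algebraMap K _ b) ∨
  (p = FreeAlgebra.ι K (0 : Fin 2) * FreeAlgebra.ι K (1 : Fin 2) ∧
    q = algebraMap K _ ε * (FreeAlgebra.ι K (1 : Fin 2) * FreeAlgebra.ι K (0 : Fin 2)))

/-- The symbol algebra `(a,b;K,ε)`. -/
noncomputable def SymbolAlgebra (K : Type) [Field K] (n : ℕ) (ε a b : K) : Type :=
  RingQuot (SymbolRel K n ε a b)

noncomputable instance (K : Type) [Field K] (n : ℕ) (ε a b : K) :
    Ring (SymbolAlgebra K n ε a b) := by unfold SymbolAlgebra; infer_instance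

noncomputable instance (K : Type) [Field K] (n : ℕ) (ε a b : K) :
    Algebra K (SymbolAlgebra K n ε a b) := by unfold SymbolAlgebra; infer_instance

open Polynomial Filter Topology
open scoped Valued

theorem Valuation.map_eq_one_of_pow_eq_one {R Γ₀ : Type*} [Ring R]
    [LinearOrderedCommGroupWithZero Γ₀] (w : Valuation R Γ₀) {x : R} {m : ℕ} (hm : m ≠ 0)
    (hx : x ^ m = 1) : w x = 1 :=
  (pow_eq_one_iff_left hm).mp (by rw [← map_pow, hx, map_one])

theorem FiniteField.natCast_ne_zero_of_card_mod_eq {Fq : Type*} [Field Fq] [Fintype Fq] {n : ℕ}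
    (hq : Fintype.card Fq % n = 1 % n) : (n : Fq) ≠ 0 := by
  intro hn
  obtain ⟨k, hk⟩ := (Nat.modEq_iff_dvd' Fintype.card_pos).mp hq.symm
  have := congrArg (Nat.cast : ℕ → Fq) hk
  rw [Nat.cast_sub Fintype.card_pos, FiniteField.cast_card_eq_zero, Nat.cast_mul, hn] at this
  simp at this

namespace Valued

variable {K Γ₀ : Type*} [Field K] [LinearOrderedCommGroupWithZero Γ₀] [Valued K Γ₀]

local notation "v" => (Valued.v : Valuation K Γ₀)

instance : NonarchimedeanAddGroup K where
  is_nonarchimedean U hU := by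
    obtain ⟨γ, hγ⟩ := mem_nhds_zero.mp hU
    exact ⟨⟨v.restrict.ltAddSubgroup γ, isOpen_ball K γ.1⟩, hγ⟩

theorem tendsto_zero_of_valuation_le {ι : Type*} {l : Filter ι} {f g : ι → K}
    (hg : Tendsto g l (𝓝 0)) (hfg : ∀ i, v (f i) ≤ v (g i)) : Tendsto f l (𝓝 0) := by
  rw [(hasBasis_nhds_zero K Γ₀).tendsto_right_iff] at hg ⊢
  intro γ _
  filter_upwards [hg γ trivial] with i hi
  simp only [Valuation.restrict_lt_iff_lt_embedding] at hi ⊢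
  exact (hfg i).trans_lt hi

section Newton

variable (P : 𝒪[K][X])

theorem newtonMap_estimates {x : 𝒪[K]} (hPx : v ↑(P.eval x) < 1)
    (hP'x : v ↑(P.derivative.eval x) = 1) :
    v ↑(P.newtonMap x - x) = v ↑(P.eval x) ∧
      v ↑(P.derivative.eval (P.newtonMap x)) = 1 ∧
      v ↑(P.eval (P.newtonMap x)) ≤ v ↑(P.eval x) ^ 2 := by
  have hunit : IsUnit (P.derivative.eval x) :=
    (Valuation.integer.integers _).isUnit_iff_valuation_eq_one.mpr hP'x
  set h : 𝒪[K] := ↑hunit.unit⁻¹ * P.eval x with hh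
  have hnewton : P.newtonMap x = x + -h := by
    rw [newtonMap_apply_of_isUnit (by simpa using hunit)]
    simp [hh, sub_eq_add_neg]
  have hvh : v h = v ↑(P.eval x) := by
    have : v ↑hunit.unit⁻¹ = 1 :=
      (Valuation.integer.integers _).isUnit_iff_valuation_eq_one.mp (Units.isUnit _)
    simp [hh, this]
  have hh1 : v h < 1 := hvh ▸ hPx
  obtain ⟨z, hz⟩ := P.derivative.evalSubFactor (x + -h) x
  obtain ⟨k, hk⟩ := P.binomExpansion x (-h)
  have hderiv_mul : P.derivative.eval x * h = P.eval x := by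
    rw [hh, ← mul_assoc, IsUnit.mul_val_inv, one_mul]
  refine ⟨?_, ?_, ?_⟩
  · simp [hnewton, hvh]
  · rw [hnewton, ← sub_add_cancel (P.derivative.eval (x + -h)) (P.derivative.eval x), hz]
    push_cast
    rw [Valuation.map_add_eq_of_lt_right, hP'x]
    calc v ((z : K) * (x + -h - x)) = v (z : K) * v h := by simp
      _ < 1 := (mul_le_of_le_one_left' z.2).trans_lt hh1
      _ = v ↑(P.derivative.eval x) := hP'x.symm
  · rw [hnewton, hk, mul_neg, hderiv_mul, add_neg_cancel, zero_add, neg_sq]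
    push_cast
    rw [map_mul, map_pow, hvh]
    exact mul_le_of_le_one_left' k.2

theorem newtonMap_iterate_estimates {a : 𝒪[K]} (ha : v ↑(P.eval a) < 1)
    (ha' : v ↑(P.derivative.eval a) = 1) (k : ℕ) :
    v ↑(P.derivative.eval (P.newtonMap^[k] a)) = 1 ∧
      v ↑(P.eval (P.newtonMap^[k] a)) ≤ v ↑(P.eval a) ^ (k + 1) := by
  induction k with
  | zero => simp [ha']
  | succ k ih =>
    have hlt : v ↑(P.eval (P.newtonMap^[k] a)) < 1 :=
      ih.2.trans_lt (pow_lt_one' ha k.succ_ne_zero)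
    obtain ⟨-, hderiv, hsq⟩ := newtonMap_estimates P hlt ih.1
    rw [Function.iterate_succ_apply']
    refine ⟨hderiv, hsq.trans ?_⟩
    calc v ↑(P.eval (P.newtonMap^[k] a)) ^ 2 ≤ (v ↑(P.eval a) ^ (k + 1)) ^ 2 := by
          gcongr; exact ih.2
      _ = v ↑(P.eval a) ^ (2 * k + 2) := by rw [← pow_mul]; ring_nf
      _ ≤ v ↑(P.eval a) ^ (k + 1 + 1) := pow_le_pow_right_of_le_one' ha.le (by omega)

theorem hensels_lemma [MulArchimedean Γ₀] [CompleteSpace K] {a : 𝒪[K]}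
    (ha : v ↑(P.eval a) < 1) (ha' : v ↑(P.derivative.eval a) = 1) :
    ∃ x : 𝒪[K], P.eval x = 0 := by
  set x : ℕ → K := fun k => ↑(P.newtonMap^[k] a)
  have hgeom : Tendsto (fun k => (↑(P.eval a) : K) ^ (k + 1)) atTop (𝓝 0) :=
    (tendsto_zero_pow_of_v_lt_one ha).comp (tendsto_add_atTop_nat 1)
  have hdiff : Tendsto (fun k => x (k + 1) - x k) atTop (𝓝 0) := by
    refine tendsto_zero_of_valuation_le hgeom fun k => ?_
    obtain ⟨hderiv, hval⟩ := newtonMap_iterate_estimates P ha ha' k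
    have hstep := (newtonMap_estimates P (hval.trans_lt (pow_lt_one' ha k.succ_ne_zero)) hderiv).1
    simp only [x, Function.iterate_succ_apply', map_pow]
    exact_mod_cast hstep.trans_le hval
  obtain ⟨c, hc⟩ := cauchySeq_tendsto_of_complete
    (NonarchimedeanAddGroup.cauchySeq_of_tendsto_sub_nhds_zero hdiff)
  have hcO : c ∈ 𝒪[K] := (isClosed_integer K).mem_of_tendsto hc
    (Eventually.of_forall fun k => SetLike.coe_mem (P.newtonMap^[k] a))
  refine ⟨⟨c, hcO⟩, Subtype.val_injective ?_⟩
  have haeval (y : 𝒪[K]) : aeval (y : K) P = ↑(P.eval y) :=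
    aeval_algebraMap_apply_eq_algebraMap_eval y P
  have hlim : Tendsto (fun k => aeval (x k) P) atTop (𝓝 (aeval c P)) :=
    ((Polynomial.continuous_aeval P).tendsto c).comp hc
  have hzero : Tendsto (fun k => aeval (x k) P) atTop (𝓝 0) := by
    refine tendsto_zero_of_valuation_le hgeom fun k => ?_
    simpa [x, haeval] using (newtonMap_iterate_estimates P ha ha' k).2
  have hroot := tendsto_nhds_unique hlim hzero
  rwa [show c = ((⟨c, hcO⟩ : 𝒪[K]) : K) from rfl, haeval] at hroot

theorem exists_pow_eq_of_valuation_sub_one_lt [MulArchimedean Γ₀] [CompleteSpace K] {n : ℕ}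
    (hn : v (n : K) = 1) {u : K} (hu : v (u - 1) < 1) : ∃ c : K, c ^ n = u := by
  have hu1 : v u = 1 := by
    rw [← sub_add_cancel u 1, Valuation.map_add_eq_of_lt_right _ (by rwa [map_one]), map_one]
  obtain ⟨c, hc⟩ := hensels_lemma (X ^ n - C ⟨u, hu1.le⟩) (a := 1)
    (by simpa [Valuation.map_sub_swap] using hu) (by simpa [derivative_X_pow] using hn)
  refine ⟨c, ?_⟩
  simpa [sub_eq_zero] using congrArg ((↑) : 𝒪[K] → K) hc

end Newton

end Valued

namespace SymbolAlgebra

variable {K : Type} [Field K] {n : ℕ} {ε a b : K}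

noncomputable def u : SymbolAlgebra K n ε a b :=
  RingQuot.mkAlgHom K (SymbolRel K n ε a b) (FreeAlgebra.ι K 0)

noncomputable def v : SymbolAlgebra K n ε a b :=
  RingQuot.mkAlgHom K (SymbolRel K n ε a b) (FreeAlgebra.ι K 1)

theorem u_pow : (u : SymbolAlgebra K n ε a b) ^ n = algebraMap K _ a := by
  have h := RingQuot.mkAlgHom_rel K (s := SymbolRel K n ε a b) (Or.inl ⟨rfl, rfl⟩)
  rw [map_pow, AlgHom.commutes] at h
  exact h

theorem v_pow : (v : SymbolAlgebra K n ε a b) ^ n = algebraMap K _ b := by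
  have h := RingQuot.mkAlgHom_rel K (s := SymbolRel K n ε a b) (Or.inr (Or.inl ⟨rfl, rfl⟩))
  rw [map_pow, AlgHom.commutes] at h
  exact h

theorem u_mul_v : (u : SymbolAlgebra K n ε a b) * v = algebraMap K _ ε * (v * u) := by
  have h := RingQuot.mkAlgHom_rel K (s := SymbolRel K n ε a b) (Or.inr (Or.inr ⟨rfl, rfl⟩))
  simp only [map_mul, AlgHom.commutes] at h
  exact h

variable {A : Type} [Ring A] [Algebra K A]

noncomputable def lift (x y : A) (hx : x ^ n = algebraMap K A a) (hy : y ^ n = algebraMap K A b)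
    (hxy : x * y = algebraMap K A ε * (y * x)) : SymbolAlgebra K n ε a b →ₐ[K] A :=
  RingQuot.liftAlgHom K ⟨FreeAlgebra.lift K ![x, y], by
    rintro p q (⟨rfl, rfl⟩ | ⟨rfl, rfl⟩ | ⟨rfl, rfl⟩) <;> simp [hx, hy, hxy]⟩

section lift

variable (x y : A) (hx : x ^ n = algebraMap K A a) (hy : y ^ n = algebraMap K A b)
    (hxy : x * y = algebraMap K A ε * (y * x))

@[simp]
theorem lift_u : lift x y hx hy hxy u = x :=
  (RingQuot.liftAlgHom_mkAlgHom_apply _ _ _ _).trans (by simp)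

@[simp]
theorem lift_v : lift x y hx hy hxy v = y :=
  (RingQuot.liftAlgHom_mkAlgHom_apply _ _ _ _).trans (by simp)

end lift

@[ext]
theorem algHom_ext {f g : SymbolAlgebra K n ε a b →ₐ[K] A} (hu : f u = g u) (hv : f v = g v) :
    f = g :=
  RingQuot.ringQuot_ext' K f g <| FreeAlgebra.hom_ext <| funext fun i => by
    fin_cases i
    exacts [hu, hv]

noncomputable def equivPowMul {c : K} (hc : c ≠ 0) :
    SymbolAlgebra K n ε (c ^ n * a) b ≃ₐ[K] SymbolAlgebra K n ε a b :=
  AlgEquiv.ofAlgHom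
    (lift (c • u) v (by rw [_root_.smul_pow, u_pow, Algebra.smul_def, ← map_mul]) v_pow
      (by rw [smul_mul_assoc, u_mul_v, mul_smul_comm, mul_smul_comm]))
    (lift (c⁻¹ • u) v
      (by rw [_root_.smul_pow, u_pow, Algebra.smul_def, ← map_mul, inv_pow,
        inv_mul_cancel_left₀ (pow_ne_zero n hc)])
      v_pow (by rw [smul_mul_assoc, u_mul_v, mul_smul_comm, mul_smul_comm]))
    (by ext <;> simp [smul_smul, hc])
    (by ext <;> simp [smul_smul, hc])

end SymbolAlgebra

open IsDedekindDomain Polynomial in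
theorem stmt9_general (Fq : Type) [Field Fq] [Fintype Fq] (n : ℕ)
    (hqn : Fintype.card Fq % n = 1 % n)
    (ε : Fq)
    (v : HeightOneSpectrum (Polynomial Fq))
    (a a' : v.adicCompletion (RatFunc Fq))
    (ha'unit : Valued.v a' = (1 : WithZero (Multiplicative ℤ)))
    (hcong : Valued.v (a - a') < (1 : WithZero (Multiplicative ℤ)))
    (b : v.adicCompletion (RatFunc Fq)) :
    ∃ r s : ℕ, 0 < r ∧ 0 < s ∧
      Nonempty (Matrix (Fin r) (Fin r)
          (SymbolAlgebra (v.adicCompletion (RatFunc Fq)) n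
            (algebraMap (RatFunc Fq) (v.adicCompletion (RatFunc Fq)) (RatFunc.C ε)) a b)
        ≃ₐ[v.adicCompletion (RatFunc Fq)]
          Matrix (Fin s) (Fin s)
          (SymbolAlgebra (v.adicCompletion (RatFunc Fq)) n
            (algebraMap (RatFunc Fq) (v.adicCompletion (RatFunc Fq)) (RatFunc.C ε)) a' b)) := by
  have hn : (n : Fq) ≠ 0 := FiniteField.natCast_ne_zero_of_card_mod_eq hqn
  have hn0 : n ≠ 0 := by rintro rfl; exact hn Nat.cast_zero
  -- `n` is the image of a nonzero element of `𝔽_q`, hence a root of unity.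
  have hvn : Valued.v (n : v.adicCompletion (RatFunc Fq)) = 1 := by
    refine Valued.v.map_eq_one_of_pow_eq_one
      (Nat.sub_ne_zero_of_lt (Fintype.one_lt_card (α := Fq))) ?_
    rw [← map_natCast (algebraMap Fq (v.adicCompletion (RatFunc Fq))), ← map_pow,
      FiniteField.pow_card_sub_one_eq_one _ hn, map_one]
  have ha' : a' ≠ 0 := by rintro rfl; simp at ha'unit
  have hu : Valued.v (a / a' - 1) < 1 := by rwa [div_sub_one ha', map_div₀, ha'unit, div_one]
  obtain ⟨c, hc⟩ := Valued.exists_pow_eq_of_valuation_sub_one_lt hvn hu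
  have hc0 : c ≠ 0 := by
    rintro rfl
    rw [← hc, zero_pow hn0, zero_sub, Valuation.map_neg, map_one] at hu
    exact lt_irrefl _ hu
  obtain rfl : a = c ^ n * a' := by rw [hc, div_mul_cancel₀ _ ha']
  exact ⟨1, 1, one_pos, one_pos, ⟨(SymbolAlgebra.equivPowMul hc0).mapMatrix⟩⟩

open IsDedekindDomain Polynomial in
/-- over `F = 𝔽_q(t)_(f)` with `q ≡ 1 (mod n)`, if `a, a'` are units of the
valuation ring with `a ≡ a' (mod f)`, then for any `b ∈ F*` the symbol algebras `(a,b;F,ε)`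
and `(a',b;F,ε)` are Brauer equivalent. -/
theorem stmt9 (Fq : Type) [Field Fq] [Fintype Fq] (n : ℕ) (hn : 0 < n)
    (hqn : Fintype.card Fq % n = 1 % n)
    (ε : Fq) (hε : IsPrimitiveRoot ε n)
    (f : Polynomial Fq) (hf : f.Monic) (hirr : Irreducible f)
    (v : HeightOneSpectrum (Polynomial Fq)) (hv : v.asIdeal = Ideal.span {f})
    (a a' : v.adicCompletion (RatFunc Fq))
    (haunit : Valued.v a = (1 : WithZero (Multiplicative ℤ)))
    (ha'unit : Valued.v a' = (1 : WithZero (Multiplicative ℤ)))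
    (hcong : Valued.v (a - a') < (1 : WithZero (Multiplicative ℤ)))
    (b : v.adicCompletion (RatFunc Fq)) (hb : b ≠ 0) :
    ∃ r s : ℕ, 0 < r ∧ 0 < s ∧
      Nonempty (Matrix (Fin r) (Fin r)
          (SymbolAlgebra (v.adicCompletion (RatFunc Fq)) n
            (algebraMap (RatFunc Fq) (v.adicCompletion (RatFunc Fq)) (RatFunc.C ε)) a b)
        ≃ₐ[v.adicCompletion (RatFunc Fq)]
          Matrix (Fin s) (Fin s)
          (SymbolAlgebra (v.adicCompletion (RatFunc Fq)) n
            (algebraMap (RatFunc Fq) (v.adicCompletion (RatFunc Fq)) (RatFunc.C ε)) a' b)) :=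
  stmt9_general Fq n hqn ε v a a' ha'unit hcong b
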